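/- For n, k ∈ ℕ with n, k ≥ 1 define functions on [0,∞): e_n(t) := 1 if n−1 ≤ t < n and 0 otherwise; u_{n,k}(t) := n·t if 0 ≤ t ≤ 1/n, 1/k if t = n + 1/k, and 0 otherwise. Let X := span{e_n, u_{n,k} | n, k ≥ 1} ⊆ ℝ^{[0,∞)}, ordered pointwise. Let b₁ := 2·u_{1,2} and b₂ := e₂. Then: (a) 0 < b₁ and 0 < b₂; (b) the set of common upper bounds in X of {b₁ − b₂, b₂ − b₁} is not equal to the set of common upper bounds in X of {b₁ + b₂, −(b₁ + b₂)} (in particular v := 2·u_{1,3} + e₂ belongs to the first set but not the second); and (c) there exists no x ∈ X with 0 < x, x ≤ b₁ and x ≤ b₂. Consequently X is an Archimedean pre-Riesz space that is not weakly pervasive. -/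

import Mathlib

/-- The function `e_n` on `[0,∞)`: `e_n(t) = 1` if `n - 1 ≤ t < n`, and `0` otherwise. -/
noncomputable def e13 (n : ℕ) : {t : ℝ // 0 ≤ t} → ℝ := fun t =>
  if (n : ℝ) - 1 ≤ (t : ℝ) ∧ (t : ℝ) < (n : ℝ) then 1 else 0

/-- The function `u_{n,k}` on `[0,∞)`: `u_{n,k}(t) = n·t` for `0 ≤ t ≤ 1/n`,
`u_{n,k}(t) = 1/k` for `t = n + 1/k`, and `0` otherwise. -/
noncomputable def u13 (n k : ℕ) : {t : ℝ // 0 ≤ t} → ℝ := fun t =>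
  if (t : ℝ) ≤ 1 / (n : ℝ) then (n : ℝ) * (t : ℝ)
  else if (t : ℝ) = (n : ℝ) + 1 / (k : ℝ) then 1 / (k : ℝ) else 0

/-- The subspace `X = span {e_n, u_{n,k} | n, k ≥ 1}` of `ℝ^{[0,∞)}`. -/
noncomputable def X13 : Submodule ℝ ({t : ℝ // 0 ≤ t} → ℝ) :=
  Submodule.span ℝ
    ({f | ∃ n : ℕ, 1 ≤ n ∧ f = e13 n} ∪
      {f | ∃ n k : ℕ, 1 ≤ n ∧ 1 ≤ k ∧ f = u13 n k})

/-- `b₁ := 2 u_{1,2}`. -/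
noncomputable def b₁13 : {t : ℝ // 0 ≤ t} → ℝ := (2 : ℝ) • u13 1 2

/-- `b₂ := e₂`. -/
noncomputable def b₂13 : {t : ℝ // 0 ≤ t} → ℝ := e13 2

/-- `v := 2 u_{1,3} + e₂`. -/
noncomputable def v13 : {t : ℝ // 0 ≤ t} → ℝ := (2 : ℝ) • u13 1 3 + e13 2

/-! On `X` two identities between point evaluations hold, because they hold on every generator.
Let `jump t f := f t - f (⌊t⌋ + 9/10)` be the deviation of `f` at `t` from its value on the rest
of the unit interval containing `t`, and `s(f) := 8 (f(3/4) - f(5/8))` the slope on `(1/2, 1]`.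
The `e_n` have no jumps and slope `0`; `u_{n,k}` with `n ≥ 2` vanishes on `(1/2, 2]`; `u_{1,k}` has
slope `1`, jump `1` at `1` and jump `1/k` at its spike `1 + 1/k`. Hence every `f ∈ X` satisfies
`jump 1 f = s(f)` and `∑_{j<N} j · jump (1 + 1/j) f = s(f)` for all large `N`.

An `x ∈ X` with `0 ≤ x ≤ b₁, b₂` vanishes off `{1, 3/2}`, since `b₁ = 2u_{1,2}` vanishes on
`(1, ∞) \ {3/2}` and `b₂ = e₂` off `[1, 2)`. The first identity then gives `x(1) = 0` and the
second `2 x(3/2) = 0`, so `x = 0`. -/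

open Filter

local notation "ℝ₊" => {t : ℝ // 0 ≤ t}

lemma e13_nonneg (n : ℕ) (t : ℝ₊) : 0 ≤ e13 n t := by
  unfold e13; split_ifs <;> norm_num

lemma u13_nonneg (n k : ℕ) (t : ℝ₊) : 0 ≤ u13 n k t := by
  unfold u13
  split_ifs
  · exact mul_nonneg n.cast_nonneg t.2
  · positivity
  · exact le_rfl

lemma e13_apply (n : ℕ) (t : ℝ₊) : e13 n t = if ⌊(t : ℝ)⌋₊ + 1 = n then 1 else 0 := by
  have hmem : ((n : ℝ) - 1 ≤ t ∧ (t : ℝ) < n) ↔ ⌊(t : ℝ)⌋₊ + 1 = n := by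
    rcases n with _ | m
    · simpa using fun _ => t.2
    · push_cast
      rw [add_sub_cancel_right, Nat.floor_eq_iff t.2]
  simp only [e13, hmem]

/-- For `t ≥ 1`, `plateauPt t` lies in the same unit interval `[m, m + 1)` as `t`, where every `e_n`
is constant, but it is neither on a ramp nor a spike `n + 1/k` of any `u_{n,k}`. -/
noncomputable def plateauPt (t : ℝ₊) : ℝ₊ := ⟨⌊(t : ℝ)⌋₊ + 9 / 10, by positivity⟩

lemma coe_plateauPt (t : ℝ₊) : (plateauPt t : ℝ) = ⌊(t : ℝ)⌋₊ + 9 / 10 := rfl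

lemma floor_plateauPt (t : ℝ₊) : ⌊(plateauPt t : ℝ)⌋₊ = ⌊(t : ℝ)⌋₊ :=
  (Nat.floor_eq_iff (plateauPt t).2).mpr
    ⟨by rw [coe_plateauPt]; linarith, by rw [coe_plateauPt]; linarith⟩

lemma e13_plateauPt (n : ℕ) (t : ℝ₊) : e13 n (plateauPt t) = e13 n t := by
  rw [e13_apply, e13_apply, floor_plateauPt]

lemma u13_plateauPt (n : ℕ) {k : ℕ} (hk : 1 ≤ k) {t : ℝ₊} (ht : 1 ≤ (t : ℝ)) :
    u13 n k (plateauPt t) = 0 := by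
  have hn : 1 / (n : ℝ) ≤ 1 := by simpa only [one_div] using Nat.cast_inv_le_one n
  have hk₀ : (0 : ℝ) < 1 / k := by positivity
  have hk₁ : 1 / (k : ℝ) ≤ 1 := by simpa only [one_div] using Nat.cast_inv_le_one k
  have hm : 1 ≤ ⌊(t : ℝ)⌋₊ := Nat.le_floor (by exact_mod_cast ht)
  unfold u13
  rw [coe_plateauPt]
  generalize ⌊(t : ℝ)⌋₊ = m at hm ⊢
  have hm' : (1 : ℝ) ≤ m := by exact_mod_cast hm
  rw [if_neg (by linarith), if_neg]
  intro h
  have hmn : m = n := by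
    have h₁ : (m : ℝ) < n + 1 := by linarith
    have h₂ : (n : ℝ) < m + 1 := by linarith
    have : m < n + 1 := by exact_mod_cast h₁
    have : n < m + 1 := by exact_mod_cast h₂
    omega
  rw [hmn] at h
  have : (9 : ℝ) * k = 10 := by field_simp at h; linarith
  have : 9 * k = 10 := by exact_mod_cast this
  omega

lemma u13_apply_of_half_lt_of_le_one {n : ℕ} (k : ℕ) (hn : 1 ≤ n) {t : ℝ₊}
    (h₁ : 1 / 2 < (t : ℝ)) (h₂ : (t : ℝ) ≤ 1) : u13 n k t = if n = 1 then (t : ℝ) else 0 := by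
  unfold u13
  rcases eq_or_ne n 1 with rfl | hn₁
  · rw [if_pos (by simpa using h₂), if_pos rfl, Nat.cast_one, one_mul]
  · have hn₂ : (2 : ℝ) ≤ n := by exact_mod_cast (by omega : 2 ≤ n)
    have hinv : 1 / (n : ℝ) ≤ 1 / 2 := one_div_le_one_div_of_le two_pos hn₂
    have hk : (0 : ℝ) ≤ 1 / k := by positivity
    rw [if_neg (by linarith), if_neg (by linarith), if_neg hn₁]

noncomputable def spikePt (j : ℕ) : ℝ₊ := ⟨1 + 1 / (j : ℝ), by positivity⟩

lemma u13_spikePt {n k j : ℕ} (hn : 1 ≤ n) (hk : 1 ≤ k) (hj : 1 ≤ j) :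
    u13 n k (spikePt j) = if n = 1 ∧ k = j then 1 / (j : ℝ) else 0 := by
  have hj₀ : (0 : ℝ) < 1 / j := by positivity
  have hn₁ : 1 / (n : ℝ) ≤ 1 := by simpa only [one_div] using Nat.cast_inv_le_one n
  have hj₁ : 1 / (j : ℝ) ≤ 1 := by simpa only [one_div] using Nat.cast_inv_le_one j
  have hk₀ : (0 : ℝ) < 1 / k := by positivity
  have hspike : (1 : ℝ) + 1 / j = n + 1 / k ↔ n = 1 ∧ k = j := by
    constructor
    · intro h
      have hn : n = 1 := by
        have : (n : ℝ) < 2 := by linarith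
        have : n < 2 := by exact_mod_cast this
        omega
      subst hn
      refine ⟨rfl, ?_⟩
      have : (k : ℝ) = j := by
        have : 1 / (j : ℝ) = 1 / k := by push_cast at h; linarith
        rwa [one_div, one_div, inv_inj, eq_comm] at this
      exact_mod_cast this
    · rintro ⟨rfl, rfl⟩
      push_cast; ring
  unfold u13 spikePt
  dsimp only
  rw [if_neg (by linarith)]
  by_cases h : n = 1 ∧ k = j
  · rw [if_pos (hspike.mpr h), if_pos h, h.2]
  · rw [if_neg (mt hspike.mp h), if_neg h]

noncomputable def jump (t : ℝ₊) : (ℝ₊ → ℝ) →ₗ[ℝ] ℝ :=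
  LinearMap.proj (R := ℝ) (φ := fun _ => ℝ) t - LinearMap.proj (plateauPt t)

lemma jump_apply (t : ℝ₊) (f : ℝ₊ → ℝ) : jump t f = f t - f (plateauPt t) := rfl

noncomputable def rampSlope : (ℝ₊ → ℝ) →ₗ[ℝ] ℝ :=
  (8 : ℝ) • (LinearMap.proj (R := ℝ) (φ := fun _ => ℝ) ⟨3 / 4, by norm_num⟩ -
    LinearMap.proj ⟨5 / 8, by norm_num⟩)

lemma rampSlope_apply (f : ℝ₊ → ℝ) :
    rampSlope f = 8 * (f ⟨3 / 4, by norm_num⟩ - f ⟨5 / 8, by norm_num⟩) := rfl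

lemma jump_e13 (t : ℝ₊) (n : ℕ) : jump t (e13 n) = 0 := by
  rw [jump_apply, e13_plateauPt, sub_self]

lemma rampSlope_e13 (n : ℕ) : rampSlope (e13 n) = 0 := by
  rw [rampSlope_apply, e13_apply, e13_apply]
  norm_num

lemma jump_u13 (n : ℕ) {k : ℕ} (hk : 1 ≤ k) {t : ℝ₊} (ht : 1 ≤ (t : ℝ)) :
    jump t (u13 n k) = u13 n k t := by
  rw [jump_apply, u13_plateauPt n hk ht, sub_zero]

lemma rampSlope_u13 {n : ℕ} (k : ℕ) (hn : 1 ≤ n) :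
    rampSlope (u13 n k) = if n = 1 then 1 else 0 := by
  rw [rampSlope_apply, u13_apply_of_half_lt_of_le_one k hn (by norm_num) (by norm_num),
    u13_apply_of_half_lt_of_le_one k hn (by norm_num) (by norm_num)]
  split_ifs <;> norm_num

def Submodule.eventually {R M ι : Type*} [Semiring R] [AddCommMonoid M] [Module R M]
    (l : Filter ι) (p : ι → Submodule R M) : Submodule R M where
  carrier := {x | ∀ᶠ i in l, x ∈ p i}
  add_mem' hx hy := (hx.and hy).mono fun _ h => add_mem h.1 h.2
  zero_mem' := Eventually.of_forall fun _ => zero_mem _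
  smul_mem' c _ hx := hx.mono fun _ h => smul_mem _ c h

lemma X13_le {p : Submodule ℝ (ℝ₊ → ℝ)} (he : ∀ n, 1 ≤ n → e13 n ∈ p)
    (hu : ∀ n k, 1 ≤ n → 1 ≤ k → u13 n k ∈ p) : X13 ≤ p :=
  Submodule.span_le.mpr <| by
    rintro f (⟨n, hn, rfl⟩ | ⟨n, k, hn, hk, rfl⟩)
    exacts [he n hn, hu n k hn hk]

lemma jump_one_eq_rampSlope {f : ℝ₊ → ℝ} (hf : f ∈ X13) :
    jump ⟨1, zero_le_one⟩ f = rampSlope f := by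
  refine sub_eq_zero.mp <| X13_le (p := LinearMap.ker (jump ⟨1, zero_le_one⟩ - rampSlope))
    (fun n _ => ?_) (fun n k hn hk => ?_) hf <;>
    rw [LinearMap.mem_ker, LinearMap.sub_apply, sub_eq_zero]
  · rw [jump_e13, rampSlope_e13]
  · rw [jump_u13 n hk le_rfl, rampSlope_u13 k hn,
      u13_apply_of_half_lt_of_le_one k hn (by norm_num) le_rfl]

lemma eventually_sum_jump_spikePt_u13 {n k : ℕ} (hn : 1 ≤ n) (hk : 1 ≤ k) :
    ∀ᶠ N in atTop,
      ∑ j ∈ Finset.range N, (j : ℝ) * jump (spikePt j) (u13 n k) = rampSlope (u13 n k) := by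
  filter_upwards [eventually_gt_atTop k] with N hN
  have hterm (j : ℕ) :
      (j : ℝ) * jump (spikePt j) (u13 n k) = if n = 1 ∧ k = j then 1 else 0 := by
    rcases Nat.eq_zero_or_pos j with rfl | hj
    · simp only [CharP.cast_eq_zero, zero_mul]
      exact (if_neg fun h => by omega).symm
    · rw [jump_u13 n hk (le_add_of_nonneg_right (by positivity)), u13_spikePt hn hk hj]
      split_ifs
      exacts [mul_one_div_cancel (by positivity), mul_zero _]
  rw [Finset.sum_eq_single k (fun j _ hj => by rw [hterm, if_neg fun h => hj h.2.symm])
    (fun h => absurd (Finset.mem_range.mpr hN) h), hterm, rampSlope_u13 k hn]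
  simp only [and_true]

lemma eventually_sum_jump_spikePt_eq_rampSlope {f : ℝ₊ → ℝ} (hf : f ∈ X13) :
    ∀ᶠ N in atTop, ∑ j ∈ Finset.range N, (j : ℝ) * jump (spikePt j) f = rampSlope f := by
  have hker (N : ℕ) (g : ℝ₊ → ℝ) :
      g ∈ LinearMap.ker (∑ j ∈ Finset.range N, (j : ℝ) • jump (spikePt j) - rampSlope) ↔
        ∑ j ∈ Finset.range N, (j : ℝ) * jump (spikePt j) g = rampSlope g := by
    simp only [LinearMap.mem_ker, LinearMap.sub_apply, LinearMap.sum_apply,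
      LinearMap.smul_apply, smul_eq_mul, sub_eq_zero]
  have := X13_le (p := Submodule.eventually atTop fun N =>
      LinearMap.ker (∑ j ∈ Finset.range N, (j : ℝ) • jump (spikePt j) - rampSlope))
    (fun n _ => Eventually.of_forall fun N => (hker N _).mpr <| by
      simp only [jump_e13, mul_zero, Finset.sum_const_zero, rampSlope_e13])
    (fun n k hn hk => (eventually_sum_jump_spikePt_u13 hn hk).mono fun N h => (hker N _).mpr h) hf
  exact this.mono fun N h => (hker N f).mp h

lemma jump_eq_self_of_forall_ne {x : ℝ₊ → ℝ}
    (h₀ : ∀ t : ℝ₊, (t : ℝ) ≠ 1 → (t : ℝ) ≠ 3 / 2 → x t = 0)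
    {t : ℝ₊} (ht : 1 ≤ (t : ℝ)) : jump t x = x t := by
  have : (1 : ℝ) ≤ ⌊(t : ℝ)⌋₊ := by exact_mod_cast Nat.le_floor (by exact_mod_cast ht)
  rw [jump_apply, sub_eq_self]
  exact h₀ _ (by rw [coe_plateauPt]; linarith) (by rw [coe_plateauPt]; linarith)

lemma sum_jump_spikePt_of_forall_ne {x : ℝ₊ → ℝ}
    (h₀ : ∀ t : ℝ₊, (t : ℝ) ≠ 1 → (t : ℝ) ≠ 3 / 2 → x t = 0)
    {N : ℕ} (hN : 2 < N) :
    ∑ j ∈ Finset.range N, (j : ℝ) * jump (spikePt j) x = 2 * x (spikePt 2) := by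
  have hspike_ge (j : ℕ) : 1 ≤ (spikePt j : ℝ) := le_add_of_nonneg_right (by positivity)
  rw [Finset.sum_eq_single 2 (fun j _ hj => ?_) (fun h => absurd (Finset.mem_range.mpr hN) h),
    jump_eq_self_of_forall_ne h₀ (hspike_ge 2), Nat.cast_ofNat]
  rcases Nat.eq_zero_or_pos j with rfl | hj₀
  · rw [Nat.cast_zero, zero_mul]
  have hj₁ : (0 : ℝ) < 1 / j := by positivity
  have hcoe : (spikePt j : ℝ) = 1 + 1 / j := rfl
  have hne : (spikePt j : ℝ) ≠ 3 / 2 := by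
    rw [hcoe]
    intro h
    have : (j : ℝ) = 2 := by field_simp at h; linarith
    exact hj (by exact_mod_cast this)
  rw [jump_eq_self_of_forall_ne h₀ (hspike_ge j), h₀ _ (by rw [hcoe]; intro h; linarith) hne,
    mul_zero]

lemma eq_zero_of_mem_X13_of_forall_ne {x : ℝ₊ → ℝ}
    (h₀ : ∀ t : ℝ₊, (t : ℝ) ≠ 1 → (t : ℝ) ≠ 3 / 2 → x t = 0)
    (hx : x ∈ X13) : x = 0 := by
  have hslope : rampSlope x = 0 := by
    rw [rampSlope_apply, h₀ _ (by norm_num) (by norm_num), h₀ _ (by norm_num) (by norm_num)]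
    norm_num
  have hone : x ⟨1, zero_le_one⟩ = 0 := by
    rw [← jump_eq_self_of_forall_ne h₀ le_rfl, jump_one_eq_rampSlope hx, hslope]
  have hspike : x (spikePt 2) = 0 := by
    obtain ⟨N, hN, hN₂⟩ :=
      ((eventually_sum_jump_spikePt_eq_rampSlope hx).and (eventually_gt_atTop 2)).exists
    rw [hslope, sum_jump_spikePt_of_forall_ne h₀ hN₂] at hN
    simpa using hN
  funext t
  by_cases h₁ : (t : ℝ) = 1
  · rw [show t = ⟨1, zero_le_one⟩ from Subtype.ext h₁, hone, Pi.zero_apply]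
  by_cases h₃ : (t : ℝ) = 3 / 2
  · rw [show t = spikePt 2 from Subtype.ext (by rw [h₃, spikePt]; norm_num), hspike,
      Pi.zero_apply]
  exact h₀ t h₁ h₃

lemma b₁13_pos : 0 < b₁13 :=
  Pi.lt_def.mpr ⟨fun t => mul_nonneg zero_le_two (u13_nonneg 1 2 t), ⟨1, zero_le_one⟩,
    by norm_num [b₁13, u13]⟩

lemma b₂13_pos : 0 < b₂13 :=
  Pi.lt_def.mpr ⟨e13_nonneg 2, ⟨1, zero_le_one⟩, by norm_num [b₂13, e13]⟩

lemma b₁13_eq_zero_or_b₂13_eq_zero {t : ℝ₊} (h₁ : (t : ℝ) ≠ 1) (h₃ : (t : ℝ) ≠ 3 / 2) :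
    b₁13 t = 0 ∨ b₂13 t = 0 := by
  rcases h₁.lt_or_gt with h | h
  · right
    norm_num [b₂13, e13]
    intro h'
    linarith
  · left
    norm_num [b₁13, u13, h.not_ge]
    intro h'
    exact h₃ (by linarith)

lemma u13_one_two_le : u13 1 2 ≤ u13 1 3 + e13 2 := fun t => by
  have h₃ := u13_nonneg 1 3 t
  have h₂ := e13_nonneg 2 t
  simp only [Pi.add_apply]
  by_cases h : (t : ℝ) ≤ 1
  · simpa [u13, h] using h₂
  by_cases h' : (t : ℝ) = 3 / 2
  · norm_num [u13, e13, h']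
  · have : u13 1 2 t = 0 := by norm_num [u13, h, h']
    linarith

lemma v13_mem_X13 : v13 ∈ X13 :=
  add_mem (Submodule.smul_mem _ _ (Submodule.subset_span (Or.inr ⟨1, 3, le_rfl, by norm_num, rfl⟩)))
    (Submodule.subset_span (Or.inl ⟨2, by norm_num, rfl⟩))

lemma not_add_le_v13 : ¬b₁13 + b₂13 ≤ v13 := fun h => by
  have := h ⟨3 / 2, by norm_num⟩
  norm_num [b₁13, b₂13, v13, u13, e13] at this

lemma b₁13_sub_b₂13_le_v13 : b₁13 - b₂13 ≤ v13 := fun t => by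
  have h₁₂ := u13_one_two_le t
  have h₂ := e13_nonneg 2 t
  simp only [b₁13, b₂13, v13, Pi.sub_apply, Pi.add_apply, Pi.smul_apply, smul_eq_mul] at h₁₂ ⊢
  linarith

lemma b₂13_sub_b₁13_le_v13 : b₂13 - b₁13 ≤ v13 := fun t => by
  have h₂ := u13_nonneg 1 2 t
  have h₃ := u13_nonneg 1 3 t
  simp only [b₁13, b₂13, v13, Pi.sub_apply, Pi.add_apply, Pi.smul_apply, smul_eq_mul]
  linarith

/-- (a) `0 < b₁` and `0 < b₂`; (b) the set of common upper bounds in `X`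
of `{b₁ - b₂, b₂ - b₁}` differs from that of `{b₁ + b₂, -(b₁ + b₂)}`; in particular
`v = 2 u_{1,3} + e₂` belongs to the first set but not the second; (c) there is no `x ∈ X`
with `0 < x`, `x ≤ b₁` and `x ≤ b₂`.  Consequently the Archimedean pre-Riesz space `X` is
not weakly pervasive. -/
theorem statement13 :
    (0 < b₁13 ∧ 0 < b₂13) ∧
    (v13 ∈ X13 ∧ b₁13 - b₂13 ≤ v13 ∧ b₂13 - b₁13 ≤ v13 ∧ ¬(b₁13 + b₂13 ≤ v13)) ∧
    ({w : {t : ℝ // 0 ≤ t} → ℝ | w ∈ X13 ∧ b₁13 - b₂13 ≤ w ∧ b₂13 - b₁13 ≤ w} ≠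
      {w : {t : ℝ // 0 ≤ t} → ℝ | w ∈ X13 ∧ b₁13 + b₂13 ≤ w ∧ -(b₁13 + b₂13) ≤ w}) ∧
    ¬∃ x : {t : ℝ // 0 ≤ t} → ℝ, x ∈ X13 ∧ 0 < x ∧ x ≤ b₁13 ∧ x ≤ b₂13 := by
  have hv : v13 ∈ {w : {t : ℝ // 0 ≤ t} → ℝ | w ∈ X13 ∧ b₁13 - b₂13 ≤ w ∧ b₂13 - b₁13 ≤ w} :=
    ⟨v13_mem_X13, b₁13_sub_b₂13_le_v13, b₂13_sub_b₁13_le_v13⟩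
  refine ⟨⟨b₁13_pos, b₂13_pos⟩, ⟨hv.1, hv.2.1, hv.2.2, not_add_le_v13⟩,
    fun h => not_add_le_v13 (h ▸ hv).2.1, ?_⟩
  rintro ⟨x, hx, hpos, hle₁, hle₂⟩
  refine hpos.ne' (eq_zero_of_mem_X13_of_forall_ne (fun t h₁ h₃ => le_antisymm ?_ (hpos.le t)) hx)
  rcases b₁13_eq_zero_or_b₂13_eq_zero h₁ h₃ with h | h
  · exact h ▸ hle₁ t
  · exact h ▸ hle₂ t
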